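/- Let G be a simple graph on a finite vertex type V and let ℓ : Fin p → Sym2 V → ZMod 2 be a family of p edge-labelings. Call a simple graph G' on V with G' ≤ G well-behaved if for every i : Fin p there exists a cycle of G' whose label sum with respect to ℓ i equals 1. Suppose G is well-behaved, but for every edge e of G the graph obtained from G by deleting e is not well-behaved. Then for every spanning forest F of G, the number of edges of G that are not edges of F is at most p. -/

import Mathlib

/-!
Fix a labelling `ℓ` and two non-forest edges `e₁ ≠ e₂` such that neither `G - e₁` nor `G - e₂`
has a cycle of odd `ℓ`-label sum. Since every closed walk of odd label sum contains such a cycle,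
in `G - e₁` the label sum of a walk depends only on its endpoints. An odd cycle of `G` must use
`e₁ = s(x, y)`, so the forest path from `x` to `y`, which avoids `e₁`, has the same label sum as
the rest of that cycle, namely `ℓ e₁ + 1`. Closing this path with `e₁` gives an odd cycle avoiding
`e₂`, a contradiction. Hence assigning to each non-forest edge `e` a labelling `ℓ i` for which
`G - e` has no odd cycle is injective.
-/

open SimpleGraph

namespace SimpleGraph

variable {V : Type*} {G H : SimpleGraph V}

namespace Walk

def labelSum {M : Type*} [AddCommMonoid M] (ℓ : Sym2 V → M) {u v : V} (w : G.Walk u v) : M :=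
  (w.edges.map ℓ).sum

section labelSum

variable {M : Type*} [AddCommMonoid M] (ℓ : Sym2 V → M) {u v w : V}

@[simp] lemma labelSum_nil : (nil : G.Walk u u).labelSum ℓ = 0 := rfl

@[simp] lemma labelSum_cons (h : G.Adj u v) (p : G.Walk v w) :
    (cons h p).labelSum ℓ = ℓ s(u, v) + p.labelSum ℓ := by
  simp [labelSum]

@[simp] lemma labelSum_append (p : G.Walk u v) (q : G.Walk v w) :
    (p.append q).labelSum ℓ = p.labelSum ℓ + q.labelSum ℓ := by
  simp [labelSum]

@[simp] lemma labelSum_reverse (p : G.Walk u v) : p.reverse.labelSum ℓ = p.labelSum ℓ := by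
  simp [labelSum]

@[simp] lemma labelSum_mapLe (hGH : G ≤ H) (p : G.Walk u v) :
    (p.mapLe hGH).labelSum ℓ = p.labelSum ℓ := by
  simp [labelSum]

@[simp] lemma labelSum_toDeleteEdge (e : Sym2 V) (p : G.Walk u v) (he : e ∉ p.edges) :
    (p.toDeleteEdge e he).labelSum ℓ = p.labelSum ℓ := by
  simp [labelSum]

end labelSum

lemma exists_eq_append_cons_of_mem_edges {u v : V} {e : Sym2 V} :
    ∀ (w : G.Walk u v), e ∈ w.edges → ∃ (x y : V) (p : G.Walk u x) (h : G.Adj x y)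
      (q : G.Walk y v), s(x, y) = e ∧ w = p.append (cons h q)
  | nil, he => by simp at he
  | cons h w, he => by
    rcases List.mem_cons.mp he with rfl | he
    · exact ⟨_, _, nil, h, w, rfl, rfl⟩
    · obtain ⟨x, y, p, h', q, hxy, rfl⟩ := exists_eq_append_cons_of_mem_edges w he
      exact ⟨x, y, cons h p, h', q, hxy, rfl⟩

end Walk

def HasOddCycle (G : SimpleGraph V) (ℓ : Sym2 V → ZMod 2) : Prop :=
  ∃ (v : V) (γ : G.Walk v v), γ.IsCycle ∧ γ.labelSum ℓ = 1

variable {ℓ : Sym2 V → ZMod 2}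

theorem Walk.hasOddCycle_of_labelSum_eq_one {v : V} (w : G.Walk v v) (hw : w.labelSum ℓ = 1) :
    G.HasOddCycle ℓ := by
  induction hlen : w.length using Nat.strong_induction_on generalizing v with
  | _ n ih =>
  cases w with
  | nil => simp at hw
  | @cons _ y _ h t =>
    -- Either `cons h t` is a cycle, or it backtracks along `h` (label sum `2 ℓ(h) = 0`), or
    -- `t` contains a nonempty closed subwalk `c`; then `c` or `cons h t` with `c` cut out is odd.
    by_cases ht : t.IsPath
    · by_cases he : s(v, y) ∈ t.edges
      · rw [Sym2.eq_swap] at he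
        rw [ht.eq_adj_toWalk_of_mem_edges he] at hw
        simp [Sym2.eq_swap, CharTwo.add_self_eq_zero] at hw
      · exact ⟨v, cons h t, (cons_isCycle_iff t h).2 ⟨ht, he⟩, hw⟩
    · obtain ⟨x, c, ⟨p, q, rfl⟩, hc⟩ : ∃ (x : V) (c : G.Walk x x), c.IsSubwalk t ∧ ¬ c.Nil := by
        simpa [isPath_iff_isSubwalk_imp_nil] using ht
      have hsplit : c.labelSum ℓ + (cons h (p.append q)).labelSum ℓ = 1 := by
        rw [← hw]; simp only [labelSum_cons, labelSum_append]; abel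
      have hc_len : 0 < c.length := not_nil_iff_lt_length.mp hc
      have hsplit_odd : ∀ a b : ZMod 2, a + b = 1 → a = 1 ∨ b = 1 := by decide
      rcases hsplit_odd _ _ hsplit with hodd | hodd
      · exact ih _ (by simp [← hlen]; omega) c hodd rfl
      · exact ih _ (by simp [← hlen]; omega) _ hodd rfl

theorem Walk.labelSum_eq_of_not_hasOddCycle (hH : ¬ H.HasOddCycle ℓ) {u v : V}
    (p q : H.Walk u v) : p.labelSum ℓ = q.labelSum ℓ := by
  by_contra hne
  have hodd : ∀ a b : ZMod 2, a ≠ b → a + b = 1 := by decide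
  exact hH <| hasOddCycle_of_labelSum_eq_one (p.append q.reverse) (by simpa using hodd _ _ hne)

lemma le_deleteEdges_singleton {F : SimpleGraph V} {e : Sym2 V} (hFG : F ≤ G)
    (he : e ∉ F.edgeSet) : F ≤ G.deleteEdges {e} := by
  intro x y hxy
  simp only [deleteEdges_adj, Set.mem_singleton_iff]
  exact ⟨hFG hxy, fun hxy_e => he (hxy_e ▸ hxy)⟩

theorem Walk.IsTrail.labelSum_eq_add_one_of_mem_edges {v x y : V} {γ : G.Walk v v}
    (hγ : γ.IsTrail) (hodd : γ.labelSum ℓ = 1) (he : s(x, y) ∈ γ.edges)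
    (hbal : ¬ (G.deleteEdges {s(x, y)}).HasOddCycle ℓ) (R : (G.deleteEdges {s(x, y)}).Walk x y) :
    R.labelSum ℓ = ℓ s(x, y) + 1 := by
  obtain ⟨x', y', p, h, q, hxy, rfl⟩ := exists_eq_append_cons_of_mem_edges γ he
  have hnodup := hγ.edges_nodup
  simp only [edges_append, edges_cons, hxy, List.nodup_append, List.nodup_cons] at hnodup
  have hp : s(x, y) ∉ p.edges := fun hp => hnodup.2.2 _ hp _ List.mem_cons_self rfl
  -- `q ++ p` is `γ` with the edge `s(x, y)` cut out
  let W : (G.deleteEdges {s(x, y)}).Walk y' x' :=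
    (q.append p).toDeleteEdge _ (by simp [hp, hnodup.2.1.1])
  have hW : W.labelSum ℓ = ℓ s(x, y) + 1 := by
    simp only [W, labelSum_toDeleteEdge, labelSum_append, labelSum_cons, hxy] at hodd ⊢
    grind
  rcases Sym2.eq_iff.mp hxy with ⟨rfl, rfl⟩ | ⟨rfl, rfl⟩
  · rw [labelSum_eq_of_not_hasOddCycle hbal R W.reverse, labelSum_reverse, hW]
  · rw [labelSum_eq_of_not_hasOddCycle hbal R W, hW]

theorem hasOddCycle_deleteEdges_of_ne {F : SimpleGraph V} (hFG : F ≤ G)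
    (hreach : ∀ ⦃x y : V⦄, G.Adj x y → F.Reachable x y) {e₁ e₂ : Sym2 V} (hne : e₁ ≠ e₂)
    (he₁ : e₁ ∉ F.edgeSet) (he₂ : e₂ ∉ F.edgeSet) (hG : G.HasOddCycle ℓ)
    (h₁ : ¬ (G.deleteEdges {e₁}).HasOddCycle ℓ) : (G.deleteEdges {e₂}).HasOddCycle ℓ := by
  obtain ⟨v, γ, hγ, hodd⟩ := hG
  have hmem : e₁ ∈ γ.edges := by
    by_contra hmem
    exact h₁ ⟨v, γ.toDeleteEdge e₁ hmem, hγ.transfer _, by simpa using hodd⟩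
  induction e₁ using Sym2.ind with | _ x y =>
  have h := γ.adj_of_mem_edges hmem
  obtain ⟨P, hP⟩ := (hreach h).exists_isPath
  have hPsum := hγ.isTrail.labelSum_eq_add_one_of_mem_edges hodd hmem h₁
    (P.mapLe (le_deleteEdges_singleton hFG he₁))
  have hadj : (G.deleteEdges {e₂}).Adj x y := by simpa [deleteEdges_adj, h] using hne
  refine ⟨x, .cons hadj (P.reverse.mapLe (le_deleteEdges_singleton hFG he₂)), ?_, ?_⟩
  · refine (Walk.cons_isCycle_iff _ _).2 ⟨hP.reverse.mapLe _, ?_⟩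
    simpa [Walk.edges_mapLe_eq_edges] using fun hmem => he₁ (P.edges_subset_edgeSet hmem)
  · simp only [Walk.labelSum_cons, Walk.labelSum_mapLe, Walk.labelSum_reverse] at hPsum ⊢
    grind

end SimpleGraph

theorem stmt12_general {V : Type*} [Fintype V] [DecidableEq V] {p : ℕ}
    (G : SimpleGraph V) [DecidableRel G.Adj] (ℓ : Fin p → Sym2 V → ZMod 2)
    (hgood : ∀ i : Fin p, ∃ (v : V) (γ : G.Walk v v), γ.IsCycle ∧
        (γ.edges.map (ℓ i)).sum = 1)
    (hmin : ∀ e ∈ G.edgeSet,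
        ¬ (∀ i : Fin p, ∃ (v : V) (γ : (G.deleteEdges {e}).Walk v v), γ.IsCycle ∧
            (γ.edges.map (ℓ i)).sum = 1))
    (F : SimpleGraph V) [DecidableRel F.Adj] (hF : F ≤ G)
    (hFspan : ∀ u v : V, F.Reachable u v ↔ G.Reachable u v) :
    (G.edgeFinset \ F.edgeFinset).card ≤ p := by
  set s := G.edgeFinset \ F.edgeFinset
  have hkey : ∀ e : s, ∃ i, ¬ (G.deleteEdges {e.1}).HasOddCycle (ℓ i) := fun e =>
    not_forall.mp (hmin e (mem_edgeFinset.mp (Finset.mem_sdiff.mp e.2).1))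
  choose f hf using hkey
  have hnotF : ∀ e : s, e.1 ∉ F.edgeSet := fun e => by simpa using (Finset.mem_sdiff.mp e.2).2
  have hinj : Function.Injective f := by
    intro e₁ e₂ hf₁₂
    by_contra hne
    refine hf e₂ ?_
    rw [← hf₁₂]
    exact hasOddCycle_deleteEdges_of_ne hF (fun x y h => (hFspan x y).2 h.reachable)
      (Subtype.coe_injective.ne hne) (hnotF e₁) (hnotF e₂) (hgood (f e₁)) (hf e₁)
  simpa only [Fintype.card_coe, Fintype.card_fin] using Fintype.card_le_of_injective f hinj

/-- Let `G` be a simple graph on a finite vertex type with a family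
`ℓ : Fin p → Sym2 V → ZMod 2` of `p` edge-labelings. Call a subgraph `G' ≤ G`
well-behaved if for every `i : Fin p` it contains a cycle whose `ℓ i`-label sum is `1`.
If `G` is well-behaved but deleting any single edge of `G` destroys well-behavedness,
then for every spanning forest `F` of `G` the number of non-forest edges is at most `p`. -/
theorem stmt12 {V : Type*} [Fintype V] [DecidableEq V] {p : ℕ}
    (G : SimpleGraph V) [DecidableRel G.Adj] (ℓ : Fin p → Sym2 V → ZMod 2)
    (hgood : ∀ i : Fin p, ∃ (v : V) (γ : G.Walk v v), γ.IsCycle ∧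
        (γ.edges.map (ℓ i)).sum = 1)
    (hmin : ∀ e ∈ G.edgeSet,
        ¬ (∀ i : Fin p, ∃ (v : V) (γ : (G.deleteEdges {e}).Walk v v), γ.IsCycle ∧
            (γ.edges.map (ℓ i)).sum = 1))
    (F : SimpleGraph V) [DecidableRel F.Adj] (hF : F ≤ G) (hFacyclic : F.IsAcyclic)
    (hFspan : ∀ u v : V, F.Reachable u v ↔ G.Reachable u v) :
    (G.edgeFinset \ F.edgeFinset).card ≤ p :=
  stmt12_general G ℓ hgood hmin F hF hFspan
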